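/- arXiv:2109.10648 — 4 statements merged into one kernel-verified Lean document; each statement's English description precedes it below -/
import Mathlib

section
/- Let f : ℝ → ℝ be f(t) = e^{−t}. Define iterated vector fields by f^{∘1} := f and f^{∘(k+1)} := (f^{∘k})′ · f. Then for every k ≥ 1, f^{∘k}(t) = (−1)^{k−1} (k−1)! e^{−kt}; in particular |f^{∘(N+1)}(0)| = N! for every N ≥ 0. -/
lemma deriv_cexp_aux (c k : ℝ) :
    deriv (fun t : ℝ => c * Real.exp (-k * t)) = fun t => c * (-k) * Real.exp (-k * t) := by
  funext t
  have h : HasDerivAt (fun t : ℝ => c * Real.exp (-k * t))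
      (c * (Real.exp (-k * t) * (-k))) t := by
    have : HasDerivAt (fun t : ℝ => (-k) * t) (-k) t := by
      simpa using (hasDerivAt_id t).const_mul (-k)
    exact (this.exp).const_mul c
  rw [h.deriv]; ring

/-- for f(t) = e^{-t}, the iterated vector fields
f^{∘1} := f, f^{∘(k+1)} := (f^{∘k})' ⬝ f satisfy
f^{∘k}(t) = (-1)^{k-1} (k-1)! e^{-kt}, and in particular
|f^{∘(N+1)}(0)| = N!. -/
theorem stmt1 (F : ℕ → ℝ → ℝ)
    (h1 : ∀ t, F 1 t = Real.exp (-t))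
    (hrec : ∀ k, 1 ≤ k → ∀ t, F (k + 1) t = deriv (F k) t * Real.exp (-t)) :
    (∀ k, 1 ≤ k → ∀ t,
      F k t = (-1 : ℝ) ^ (k - 1) * (Nat.factorial (k - 1) : ℝ) * Real.exp (-(k : ℝ) * t)) ∧
    (∀ N : ℕ, |F (N + 1) 0| = (Nat.factorial N : ℝ)) := by
  have main : ∀ k, 1 ≤ k → ∀ t,
      F k t = (-1 : ℝ) ^ (k - 1) * (Nat.factorial (k - 1) : ℝ) * Real.exp (-(k : ℝ) * t) := by
    intro k hk
    induction k with
    | zero => omega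
    | succ n ih =>
      rcases Nat.eq_or_lt_of_le hk with h | h
      · intro t
        have : n = 0 := by omega
        subst this
        simpa using h1 t
      · have hn : 1 ≤ n := by omega
        intro t
        have hFn : F n = fun t => (-1 : ℝ) ^ (n - 1) * (Nat.factorial (n - 1) : ℝ) *
            Real.exp (-(n : ℝ) * t) := funext (ih hn)
        rw [hrec n hn t, hFn, deriv_cexp_aux]
        have h1' : (n + 1 : ℕ) - 1 = n := by omega
        rw [h1']
        obtain ⟨m, rfl⟩ := Nat.exists_eq_add_of_le hn
        have h2 : (1 + m : ℕ) - 1 = m := by omega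
        rw [h2, show (-(((1:ℕ)+m+1 : ℕ) : ℝ)) * t = -((1:ℕ)+m : ℕ) * t + -t by push_cast; ring,
          Real.exp_add]
        have : (1 + m : ℕ).factorial = (1 + m) * m.factorial := by
          rw [Nat.add_comm 1 m]; exact Nat.factorial_succ m
        rw [this]
        push_cast
        ring_nf
  refine ⟨main, fun N => ?_⟩
  rw [main (N + 1) (by omega) 0]
  simp [abs_mul, abs_pow]
end

section
/- Let θ > 1 and let Γ : {(s,t) : 0 ≤ s ≤ t ≤ T} → ℝ^e and a superadditive control ω (i.e., ω continuous, ω(s,s)=0, ω(s,u)+ω(u,t) ≤ ω(s,t) for s ≤ u ≤ t) satisfy ‖Γ_{s,u} + Γ_{u,t} − Γ_{s,t}‖ ≤ C ω(s,t)^θ for all s ≤ u ≤ t. Suppose Y : [0,T] → ℝ^e satisfies Y_t − Y_s = lim_{|D|→0} ∑_{t_i ∈ D} Γ_{t_i, t_{i+1}} over partitions D of [s,t]. Then for all s ≤ t, ‖Y_t − Y_s − Γ_{s,t}‖ ≤ C (1 + ∑_{n≥2} (2/n)^θ) ω(s,t)^θ. -/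
/-!
Lyons' successive dropping of points. If `τ 0 ≤ ⋯ ≤ τ (m + 3)`, the intervals `[τ i, τ (i + 2)]`
cover `[τ 0, τ (m + 3)]` at most twice, so by superadditivity one of them has
`ω (τ i) (τ (i + 2)) ≤ 2 / (m + 2) * ω (τ 0) (τ (m + 3))`, and dropping `τ (i + 1)` changes the
Riemann sum of `Γ` by at most `C * (2 / (m + 2)) ^ θ * ω (τ 0) (τ (m + 3)) ^ θ`. Dropping points
one at a time until two intervals remain bounds the distance from every Riemann sum over a
partition of `[s, t]` to `Γ s t` by `C * (1 + ∑ n, (2 / (n + 2)) ^ θ) * ω s t ^ θ`, which is finite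
as `θ > 1`; the bound passes to the limit `Y t - Y s` of the Riemann sums.
-/

open Finset

namespace Sewing

section RiemannSum

variable {M : Type*}

def riemannSum [AddCommMonoid M] (Γ : ℝ → ℝ → M) (τ : ℕ → ℝ) (n : ℕ) : M :=
  ∑ i ∈ range n, Γ (τ i) (τ (i + 1))

/-- Removing the point `τ p` from a partition `τ` gives the partition `τ ∘ succAbove p`. -/
def succAbove (p j : ℕ) : ℕ := if j < p then j else j + 1

lemma riemannSum_succ [AddCommMonoid M] (Γ : ℝ → ℝ → M) (τ : ℕ → ℝ) (n : ℕ) :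
    riemannSum Γ τ (n + 1) = riemannSum Γ τ n + Γ (τ n) (τ (n + 1)) :=
  sum_range_succ _ n

lemma succAbove_monotone (p : ℕ) : Monotone (succAbove p) := by
  intro a b hab
  unfold succAbove
  split_ifs <;> omega

lemma succAbove_le_succ (p j : ℕ) : succAbove p j ≤ j + 1 := by
  unfold succAbove
  split_ifs <;> omega

lemma riemannSum_comp_succAbove [AddCommGroup M] (Γ : ℝ → ℝ → M) (τ : ℕ → ℝ) {i n : ℕ}
    (hi : i ≤ n) :
    riemannSum Γ (τ ∘ succAbove (i + 1)) (n + 1) =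
      riemannSum Γ τ (n + 2) -
        (Γ (τ i) (τ (i + 1)) + Γ (τ (i + 1)) (τ (i + 2)) - Γ (τ i) (τ (i + 2))) := by
  induction n, hi using Nat.le_induction with
  | base =>
    have hbelow : ∀ j ∈ range i, Γ (τ (succAbove (i + 1) j)) (τ (succAbove (i + 1) (j + 1))) =
        Γ (τ j) (τ (j + 1)) := by
      intro j hj
      rw [mem_range] at hj
      simp only [succAbove, if_pos (by omega : j < i + 1), if_pos (by omega : j + 1 < i + 1)]
    simp only [riemannSum, Function.comp_apply, sum_range_succ, sum_congr rfl hbelow]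
    simp only [succAbove, if_pos (Nat.lt_succ_self i), lt_irrefl, if_false]
    abel
  | succ n hin ih =>
    have hn : succAbove (i + 1) (n + 1) = n + 2 := if_neg (by omega)
    have hn' : succAbove (i + 1) (n + 2) = n + 3 := if_neg (by omega)
    rw [riemannSum_succ Γ (τ ∘ _) (n + 1), ih, show n + 1 + 2 = n + 2 + 1 from rfl,
      riemannSum_succ Γ τ (n + 2), Function.comp_apply, Function.comp_apply, hn, hn']
    abel

end RiemannSum

lemma summable_two_div_add_two_rpow {θ : ℝ} (hθ : 1 < θ) :
    Summable fun k : ℕ => (2 / ((k : ℝ) + 2)) ^ θ := by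
  have := ((summable_nat_add_iff 2).mpr (Real.summable_nat_rpow_inv.mpr hθ)).mul_left (2 ^ θ)
  refine this.congr fun k => ?_
  rw [Real.div_rpow (by norm_num) (by positivity)]
  push_cast
  ring

lemma exists_partition_mesh_lt {s t δ : ℝ} (hst : s ≤ t) (hδ : 0 < δ) :
    ∃ (m : ℕ) (τ : ℕ → ℝ), Monotone τ ∧ τ 0 = s ∧ τ (m + 2) = t ∧ ∀ i, τ (i + 1) - τ i < δ := by
  obtain ⟨m, hm⟩ := exists_nat_gt ((t - s) / δ)
  have hstep : 0 ≤ (t - s) / (m + 2) := by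
    apply div_nonneg <;> linarith
  refine ⟨m, fun i => s + i * ((t - s) / (m + 2)), fun a b hab => ?_, by simp, ?_, fun i => ?_⟩
  · dsimp only
    gcongr
  · push_cast
    field_simp
    ring
  · rw [div_lt_iff₀ hδ] at hm
    calc s + ((i + 1 : ℕ) : ℝ) * ((t - s) / (m + 2)) - (s + i * ((t - s) / (m + 2)))
        = (t - s) / (m + 2) := by push_cast; ring
      _ < δ := by
        rw [div_lt_iff₀ (by positivity)]
        nlinarith

section Control

structure IsSuperadditiveOn (ω : ℝ → ℝ → ℝ) (I : Set ℝ) : Prop where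
  nonneg : ∀ s ∈ I, ∀ t ∈ I, s ≤ t → 0 ≤ ω s t
  superadditive : ∀ s ∈ I, ∀ u ∈ I, ∀ t ∈ I, s ≤ u → u ≤ t → ω s u + ω u t ≤ ω s t

variable {E : Type*} [SeminormedAddCommGroup E] {I : Set ℝ} {ω : ℝ → ℝ → ℝ} {τ : ℕ → ℝ}

lemma control_le_of_le_right
    (hω : IsSuperadditiveOn ω I)
    {s u t : ℝ} (hs : s ∈ I) (hu : u ∈ I) (ht : t ∈ I) (hsu : s ≤ u) (hut : u ≤ t) :
    ω s u ≤ ω s t := by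
  linarith [hω.nonneg u hu t ht hut, hω.superadditive s hs u hu t ht hsu hut]

lemma sum_control_skip_le
    (hω : IsSuperadditiveOn ω I)
    {k : ℕ} (hτ : MonotoneOn τ (Set.Iic (k + 1))) (hI : ∀ i ≤ k + 1, τ i ∈ I) :
    ∑ i ∈ range k, ω (τ i) (τ (i + 2)) ≤ ω (τ 0) (τ k) + ω (τ 0) (τ (k + 1)) := by
  have hle : ∀ a b, a ≤ b → b ≤ k + 1 → τ a ≤ τ b := fun a b hab hb =>
    hτ (Set.mem_Iic.mpr (hab.trans hb)) (Set.mem_Iic.mpr hb) hab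
  induction k with
  | zero =>
    simp only [range_zero, sum_empty, zero_add]
    linarith [hω.nonneg _ (hI 0 (by omega)) _ (hI 0 (by omega)) le_rfl,
      hω.nonneg _ (hI 0 (by omega)) _ (hI 1 le_rfl) (hle 0 1 (by omega) le_rfl)]
  | succ k ih =>
    have ih := ih (hτ.mono (Set.Iic_subset_Iic.mpr (by omega))) (fun i hi => hI i (by omega))
      (fun a b hab hb => hle a b hab (by omega))
    rw [sum_range_succ]
    linarith [hω.superadditive _ (hI 0 (by omega)) _ (hI k (by omega)) _ (hI (k + 2) le_rfl)
      (hle 0 k (by omega) (by omega)) (hle k (k + 2) (by omega) le_rfl)]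

lemma exists_control_skip_le
    (hω : IsSuperadditiveOn ω I)
    {m : ℕ} (hτ : MonotoneOn τ (Set.Iic (m + 3))) (hI : ∀ i ≤ m + 3, τ i ∈ I) :
    ∃ i < m + 2, ω (τ i) (τ (i + 2)) ≤ 2 / (m + 2) * ω (τ 0) (τ (m + 3)) := by
  set W := ω (τ 0) (τ (m + 3))
  have hsum : ∑ i ∈ range (m + 2), ω (τ i) (τ (i + 2)) ≤ ω (τ 0) (τ (m + 2)) + W :=
    sum_control_skip_le hω hτ hI
  have hmono : ω (τ 0) (τ (m + 2)) ≤ W :=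
    control_le_of_le_right hω (hI 0 (by omega)) (hI (m + 2) (by omega)) (hI (m + 3) le_rfl)
      (hτ (by simp) (by simp) (by omega)) (hτ (by simp) (by simp) (by omega))
  have hmean : ∑ _i ∈ range (m + 2), 2 / ((m : ℝ) + 2) * W = 2 * W := by
    rw [sum_const, card_range, nsmul_eq_mul]
    push_cast
    field_simp
  by_contra! hbig
  have := sum_lt_sum_of_nonempty nonempty_range_add_one (fun i hi => hbig i (mem_range.mp hi))
  linarith

lemma exists_norm_drop_point_le {Γ : ℝ → ℝ → E} {C θ : ℝ} (hC : 0 ≤ C) (hθ : 0 ≤ θ)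
    (hω : IsSuperadditiveOn ω I)
    (halmost : ∀ s ∈ I, ∀ u ∈ I, ∀ t ∈ I, s ≤ u → u ≤ t →
      ‖Γ s u + Γ u t - Γ s t‖ ≤ C * ω s t ^ θ)
    {m : ℕ} (hτ : MonotoneOn τ (Set.Iic (m + 3))) (hI : ∀ i ≤ m + 3, τ i ∈ I) :
    ∃ i < m + 2, ‖Γ (τ i) (τ (i + 1)) + Γ (τ (i + 1)) (τ (i + 2)) - Γ (τ i) (τ (i + 2))‖ ≤
      C * (2 / ((m : ℝ) + 2)) ^ θ * ω (τ 0) (τ (m + 3)) ^ θ := by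
  obtain ⟨i, hi, hωi⟩ := exists_control_skip_le hω hτ hI
  have hW : 0 ≤ ω (τ 0) (τ (m + 3)) :=
    hω.nonneg _ (hI 0 (by omega)) _ (hI (m + 3) le_rfl) (hτ (by simp) (by simp) (by omega))
  refine ⟨i, hi, ?_⟩
  calc _ ≤ C * ω (τ i) (τ (i + 2)) ^ θ :=
        halmost _ (hI i (by omega)) _ (hI (i + 1) (by omega)) _ (hI (i + 2) (by omega))
          (hτ (by simp; omega) (by simp; omega) (by omega))
          (hτ (by simp; omega) (by simp; omega) (by omega))
    _ ≤ C * (2 / ((m : ℝ) + 2) * ω (τ 0) (τ (m + 3))) ^ θ := by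
        gcongr
        exact hω.nonneg _ (hI i (by omega)) _ (hI (i + 2) (by omega))
          (hτ (by simp; omega) (by simp; omega) (by omega))
    _ = C * (2 / ((m : ℝ) + 2)) ^ θ * ω (τ 0) (τ (m + 3)) ^ θ := by
        rw [Real.mul_rpow (by positivity) hW, mul_assoc]

theorem norm_riemannSum_sub_le {Γ : ℝ → ℝ → E} {C θ : ℝ} (hC : 0 ≤ C) (hθ : 0 ≤ θ)
    (hω : IsSuperadditiveOn ω I)
    (halmost : ∀ s ∈ I, ∀ u ∈ I, ∀ t ∈ I, s ≤ u → u ≤ t →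
      ‖Γ s u + Γ u t - Γ s t‖ ≤ C * ω s t ^ θ)
    (m : ℕ) (hτ : MonotoneOn τ (Set.Iic (m + 2))) (hI : ∀ i ≤ m + 2, τ i ∈ I) :
    ‖riemannSum Γ τ (m + 2) - Γ (τ 0) (τ (m + 2))‖ ≤
      C * (1 + ∑ k ∈ range m, (2 / ((k : ℝ) + 2)) ^ θ) * ω (τ 0) (τ (m + 2)) ^ θ := by
  induction m generalizing τ with
  | zero =>
    simpa [riemannSum, sum_range_succ] using halmost _ (hI 0 (by omega)) _ (hI 1 (by omega))
      _ (hI 2 le_rfl) (hτ (by simp) (by simp) (by omega)) (hτ (by simp) (by simp) (by omega))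
  | succ m ih =>
    obtain ⟨i, hi, hdrop⟩ := exists_norm_drop_point_le hC hθ hω halmost hτ hI
    set D := Γ (τ i) (τ (i + 1)) + Γ (τ (i + 1)) (τ (i + 2)) - Γ (τ i) (τ (i + 2))
    set W := ω (τ 0) (τ (m + 3))
    have hIH := ih (τ := τ ∘ succAbove (i + 1))
      (hτ.comp ((succAbove_monotone _).monotoneOn _) fun j hj =>
        Set.mem_Iic.mpr ((succAbove_le_succ _ j).trans (by simpa using hj)))
      (fun j hj => hI _ ((succAbove_le_succ _ j).trans (by omega)))
    have h0 : succAbove (i + 1) 0 = 0 := if_pos (by omega)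
    have hlast : succAbove (i + 1) (m + 2) = m + 3 := if_neg (by omega)
    rw [riemannSum_comp_succAbove Γ τ (by omega : i ≤ m + 1), Function.comp_apply,
      Function.comp_apply, h0, hlast] at hIH
    calc ‖riemannSum Γ τ (m + 3) - Γ (τ 0) (τ (m + 3))‖
        = ‖(riemannSum Γ τ (m + 3) - D - Γ (τ 0) (τ (m + 3))) + D‖ := by abel_nf
      _ ≤ ‖riemannSum Γ τ (m + 3) - D - Γ (τ 0) (τ (m + 3))‖ + ‖D‖ := norm_add_le _ _
      _ ≤ C * (1 + ∑ k ∈ range m, (2 / ((k : ℝ) + 2)) ^ θ) * W ^ θ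
          + C * (2 / ((m : ℝ) + 2)) ^ θ * W ^ θ := add_le_add hIH hdrop
      _ = C * (1 + ∑ k ∈ range (m + 1), (2 / ((k : ℝ) + 2)) ^ θ) * W ^ θ := by
        rw [sum_range_succ]
        ring

theorem norm_riemannSum_sub_le_tsum {Γ : ℝ → ℝ → E} {C θ : ℝ} (hC : 0 ≤ C) (hθ : 1 < θ)
    (hω : IsSuperadditiveOn ω I)
    (halmost : ∀ s ∈ I, ∀ u ∈ I, ∀ t ∈ I, s ≤ u → u ≤ t →
      ‖Γ s u + Γ u t - Γ s t‖ ≤ C * ω s t ^ θ)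
    (m : ℕ) (hτ : MonotoneOn τ (Set.Iic (m + 2))) (hI : ∀ i ≤ m + 2, τ i ∈ I) :
    ‖riemannSum Γ τ (m + 2) - Γ (τ 0) (τ (m + 2))‖ ≤
      C * (1 + ∑' k : ℕ, (2 / ((k : ℝ) + 2)) ^ θ) * ω (τ 0) (τ (m + 2)) ^ θ := by
  refine (norm_riemannSum_sub_le hC (by linarith) hω halmost m hτ hI).trans ?_
  have hW := hω.nonneg _ (hI 0 (by omega)) _ (hI (m + 2) le_rfl)
    (hτ (by simp) (by simp) (by omega))
  gcongr
  exact (summable_two_div_add_two_rpow hθ).sum_le_tsum _ fun k _ => by positivity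

end Control

end Sewing

theorem stmt9_general {e : ℕ} (T : ℝ) (θ : ℝ) (hθ : 1 < θ)
    (Γ : ℝ → ℝ → EuclideanSpace ℝ (Fin e)) (ω : ℝ → ℝ → ℝ) (C : ℝ) (hC : 0 ≤ C)
    (hω0 : ∀ s t : ℝ, 0 ≤ s → s ≤ t → t ≤ T → 0 ≤ ω s t)
    (hsuper : ∀ s u t : ℝ, 0 ≤ s → s ≤ u → u ≤ t → t ≤ T → ω s u + ω u t ≤ ω s t)
    (halmost : ∀ s u t : ℝ, 0 ≤ s → s ≤ u → u ≤ t → t ≤ T →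
      ‖Γ s u + Γ u t - Γ s t‖ ≤ C * ω s t ^ θ)
    (Y : ℝ → EuclideanSpace ℝ (Fin e))
    (hY : ∀ s t : ℝ, 0 ≤ s → s ≤ t → t ≤ T → ∀ ε > (0 : ℝ), ∃ δ > (0 : ℝ),
      ∀ (n : ℕ) (τ : ℕ → ℝ), 0 < n → τ 0 = s → τ n = t →
        (∀ i < n, τ i ≤ τ (i + 1)) → (∀ i < n, τ (i + 1) - τ i < δ) →
        ‖(∑ i ∈ Finset.range n, Γ (τ i) (τ (i + 1))) - (Y t - Y s)‖ < ε) :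
    ∀ s t : ℝ, 0 ≤ s → s ≤ t → t ≤ T →
      ‖Y t - Y s - Γ s t‖ ≤
        C * (1 + ∑' n : ℕ, ((2 : ℝ) / (n + 2)) ^ θ) * ω s t ^ θ := by
  intro s t hs hst htT
  rw [← dist_eq_norm, ← Metric.mem_closedBall, ← Metric.isClosed_closedBall.closure_eq,
    Metric.mem_closure_iff]
  intro ε hε
  obtain ⟨δ, hδ, hconv⟩ := hY s t hs hst htT ε hε
  obtain ⟨m, τ, hτ, h0, hn, hmesh⟩ := Sewing.exists_partition_mesh_lt hst hδ
  have hI : ∀ i ≤ m + 2, τ i ∈ Set.Icc 0 T := fun i hi =>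
    ⟨hs.trans (h0.symm.le.trans (hτ i.zero_le)), ((hτ hi).trans hn.le).trans htT⟩
  refine ⟨Sewing.riemannSum Γ τ (m + 2), ?_, ?_⟩
  · rw [Metric.mem_closedBall, dist_eq_norm, ← h0, ← hn]
    exact Sewing.norm_riemannSum_sub_le_tsum hC hθ
      ⟨fun a ha b hb hab => hω0 a b ha.1 hab hb.2,
        fun a ha b _ c hc hab hbc => hsuper a b c ha.1 hab hbc hc.2⟩
      (fun a ha b _ c hc hab hbc => halmost a b c ha.1 hab hbc hc.2) m (hτ.monotoneOn _) hI
  · rw [dist_comm, dist_eq_norm]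
    exact hconv (m + 2) τ (by omega) h0 hn (fun i _ => hτ i.le_succ) (fun i _ => hmesh i)

/-- the "successive dropping of points" (sewing) estimate. If
‖Γ_{s,u} + Γ_{u,t} − Γ_{s,t}‖ ≤ C ω(s,t)^θ for a superadditive continuous control ω
with θ > 1, and Y_t − Y_s is the limit of ∑ Γ_{t_i,t_{i+1}} along partitions of [s,t]
with mesh tending to 0, then ‖Y_t − Y_s − Γ_{s,t}‖ ≤ C (1 + ∑_{n≥2} (2/n)^θ) ω(s,t)^θ. -/
theorem stmt9 {e : ℕ} (T : ℝ) (hT : 0 ≤ T) (θ : ℝ) (hθ : 1 < θ)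
    (Γ : ℝ → ℝ → EuclideanSpace ℝ (Fin e)) (ω : ℝ → ℝ → ℝ) (C : ℝ) (hC : 0 ≤ C)
    (hω0 : ∀ s t : ℝ, 0 ≤ s → s ≤ t → t ≤ T → 0 ≤ ω s t)
    (hωdiag : ∀ s : ℝ, 0 ≤ s → s ≤ T → ω s s = 0)
    (hsuper : ∀ s u t : ℝ, 0 ≤ s → s ≤ u → u ≤ t → t ≤ T → ω s u + ω u t ≤ ω s t)
    (hcont : ContinuousOn (fun q : ℝ × ℝ => ω q.1 q.2)
      {q : ℝ × ℝ | 0 ≤ q.1 ∧ q.1 ≤ q.2 ∧ q.2 ≤ T})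
    (halmost : ∀ s u t : ℝ, 0 ≤ s → s ≤ u → u ≤ t → t ≤ T →
      ‖Γ s u + Γ u t - Γ s t‖ ≤ C * ω s t ^ θ)
    (Y : ℝ → EuclideanSpace ℝ (Fin e))
    (hY : ∀ s t : ℝ, 0 ≤ s → s ≤ t → t ≤ T → ∀ ε > (0 : ℝ), ∃ δ > (0 : ℝ),
      ∀ (n : ℕ) (τ : ℕ → ℝ), 0 < n → τ 0 = s → τ n = t →
        (∀ i < n, τ i ≤ τ (i + 1)) → (∀ i < n, τ (i + 1) - τ i < δ) →
        ‖(∑ i ∈ Finset.range n, Γ (τ i) (τ (i + 1))) - (Y t - Y s)‖ < ε) :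
    ∀ s t : ℝ, 0 ≤ s → s ≤ t → t ≤ T →
      ‖Y t - Y s - Γ s t‖ ≤
        C * (1 + ∑' n : ℕ, ((2 : ℝ) / (n + 2)) ^ θ) * ω s t ^ θ :=
  stmt9_general T θ hθ Γ ω C hC hω0 hsuper halmost Y hY
end

section
/- Chen's identity for iterated integrals: let x : [0,T] → ℝ^d be continuous of bounded variation and s ≤ u ≤ t. Then for every k ≥ 1, X^k_{s,t} = ∑_{j=0}^{k} X^j_{s,u} ⊗ X^{k−j}_{u,t}, where X^0 := 1 ∈ ℝ and X^k_{s,t} := ∫_{s<u_1<⋯<u_k<t} dx_{u_1} ⊗ ⋯ ⊗ dx_{u_k} ∈ (ℝ^d)^{⊗k}. -/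
open scoped BigOperators

/-- Left-point Riemann–Stieltjes sum of `f` against the scalar integrator `g`
along the partition `τ 0 ≤ τ 1 ≤ ⋯ ≤ τ n`. -/
def RSSum {E : Type*} [AddCommGroup E] [Module ℝ E]
    (f : ℝ → E) (g : ℝ → ℝ) (n : ℕ) (τ : ℕ → ℝ) : E :=
  ∑ i ∈ Finset.range n, (g (τ (i + 1)) - g (τ i)) • f (τ i)

/-- `IsRS f g s t I` : the Riemann–Stieltjes integral ∫_s^t f dg exists and equals `I`,
in the sense of convergence of left-point Riemann–Stieltjes sums as the mesh of the
partition of [s,t] tends to 0. -/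
def IsRS {E : Type*} [NormedAddCommGroup E] [Module ℝ E]
    (f : ℝ → E) (g : ℝ → ℝ) (s t : ℝ) (I : E) : Prop :=
  ∀ ε > (0 : ℝ), ∃ δ > (0 : ℝ), ∀ (n : ℕ) (τ : ℕ → ℝ),
    0 < n → τ 0 = s → τ n = t → (∀ i < n, τ i ≤ τ (i + 1)) →
    (∀ i < n, τ (i + 1) - τ i < δ) → ‖RSSum f g n τ - I‖ < ε

/-- `IsSimplexIntegral d x s h w J` : `J t` is the iterated (simplex) integral
∫_{s<u_1<⋯<u_k<t} h(u_1) dx^{w_1}_{u_1} ⋯ dx^{w_k}_{u_k} for the word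
`w = [w_1, …, w_k]`, defined recursively in the outermost integration variable:
the integral for the word `w ++ [a]` over [s,t] is the Riemann–Stieltjes integral
∫_s^t (integral for `w` over [s,u]) dx^a_u. -/
inductive IsSimplexIntegral (d : ℕ) (x : Fin d → ℝ → ℝ) (s : ℝ) (h : ℝ → ℝ) :
    List (Fin d) → (ℝ → ℝ) → Prop
  | nil : IsSimplexIntegral d x s h [] h
  | step (w : List (Fin d)) (J : ℝ → ℝ) (a : Fin d) (J' : ℝ → ℝ) :
      IsSimplexIntegral d x s h w J →
      (∀ t, s ≤ t → IsRS J (x a) s t (J' t)) →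
      IsSimplexIntegral d x s h (w ++ [a]) J'

/-! Induct on the word, peeling off its last letter `a`. The integral defining
`Y s (w ++ [a]) t` splits at `u` into the integrals over `[s, u]` and `[u, t]`; since all
three Riemann–Stieltjes integrals exist, they can be compared along partitions of `[s, t]`
that contain `u`. On `[u, t]` the integrand `Y s w` is, by induction,
`∑ⱼ Y s (w.take j) u * Y u (w.drop j)`, so linearity turns the `[u, t]` part into
`∑ⱼ Y s (w.take j) u * Y u (w.drop j ++ [a]) t`, and the `[s, u]` part is the remaining
term `j = |w| + 1`. -/

def IsFinePartition (s t δ : ℝ) (n : ℕ) (τ : ℕ → ℝ) : Prop :=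
  0 < n ∧ τ 0 = s ∧ τ n = t ∧ (∀ i < n, τ i ≤ τ (i + 1)) ∧ ∀ i < n, τ (i + 1) - τ i < δ

def appendPartition (n₁ : ℕ) (τ₁ τ₂ : ℕ → ℝ) (j : ℕ) : ℝ :=
  if j ≤ n₁ then τ₁ j else τ₂ (j - n₁)

section Partitions

variable {s u t δ δ' : ℝ} {n n₁ n₂ : ℕ} {τ τ₁ τ₂ : ℕ → ℝ}

theorem exists_isFinePartition (hst : s ≤ t) (hδ : 0 < δ) :
    ∃ n τ, IsFinePartition s t δ n τ := by
  obtain ⟨n, hn⟩ := exists_nat_gt (max 1 ((t - s) / δ))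
  have hn₀ : (0 : ℝ) < n := (lt_max_iff.mpr (Or.inl one_pos)).trans hn
  have hstep : (t - s) / n < δ := by
    rw [div_lt_iff₀ hn₀]
    have := (le_max_right _ _).trans_lt hn
    rw [div_lt_iff₀ hδ] at this
    linarith
  refine ⟨n, fun i => s + i * ((t - s) / n), by exact_mod_cast hn₀, by simp, by field_simp; ring,
    fun i _ => ?_, fun i _ => ?_⟩
  · push_cast
    nlinarith [div_nonneg (sub_nonneg.mpr hst) hn₀.le]
  · push_cast
    linarith

namespace IsFinePartition

theorem mono_mesh (hτ : IsFinePartition s t δ n τ) (hδ : δ ≤ δ') :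
    IsFinePartition s t δ' n τ :=
  let ⟨hn, h0, hn', hmono, hmesh⟩ := hτ
  ⟨hn, h0, hn', hmono, fun i hi => (hmesh i hi).trans_le hδ⟩

theorem mem_Icc (hτ : IsFinePartition s t δ n τ) {i : ℕ} (hi : i ≤ n) : τ i ∈ Set.Icc s t := by
  obtain ⟨-, h0, hn, hstep, -⟩ := hτ
  have hmono : Monotone fun j => τ (min j n) := monotone_nat_of_le_succ fun j => by
    rcases lt_or_ge j n with hj | hj
    · simpa [min_eq_left hj.le, min_eq_left (Nat.succ_le_of_lt hj)] using hstep j hj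
    · simp [min_eq_right hj, min_eq_right (hj.trans j.le_succ)]
  constructor
  · simpa [h0, hi] using hmono (Nat.zero_le i)
  · simpa [hn, hi] using hmono hi

end IsFinePartition

theorem appendPartition_of_le {j : ℕ} (hj : j ≤ n₁) : appendPartition n₁ τ₁ τ₂ j = τ₁ j :=
  if_pos hj

theorem appendPartition_add (hjoin : τ₁ n₁ = τ₂ 0) (j : ℕ) :
    appendPartition n₁ τ₁ τ₂ (n₁ + j) = τ₂ j := by
  rcases j.eq_zero_or_pos with rfl | hj
  · simpa [appendPartition] using hjoin
  · simp [appendPartition, hj.ne']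

theorem forall_step_appendPartition {P : ℝ → ℝ → Prop} (hjoin : τ₁ n₁ = τ₂ 0)
    (h₁ : ∀ i < n₁, P (τ₁ i) (τ₁ (i + 1))) (h₂ : ∀ i < n₂, P (τ₂ i) (τ₂ (i + 1))) :
    ∀ i < n₁ + n₂, P (appendPartition n₁ τ₁ τ₂ i) (appendPartition n₁ τ₁ τ₂ (i + 1)) := by
  intro i hi
  rcases lt_or_ge i n₁ with hi₁ | hi₁
  · rw [appendPartition_of_le hi₁.le, appendPartition_of_le hi₁]
    exact h₁ i hi₁
  · obtain ⟨j, rfl⟩ := Nat.exists_eq_add_of_le hi₁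
    rw [appendPartition_add hjoin, add_assoc, appendPartition_add hjoin]
    exact h₂ j (by omega)

theorem IsFinePartition.append (h₁ : IsFinePartition s u δ n₁ τ₁)
    (h₂ : IsFinePartition u t δ n₂ τ₂) :
    IsFinePartition s t δ (n₁ + n₂) (appendPartition n₁ τ₁ τ₂) := by
  obtain ⟨hn₁, h0₁, hn₁', hmono₁, hmesh₁⟩ := h₁
  obtain ⟨hn₂, h0₂, hn₂', hmono₂, hmesh₂⟩ := h₂
  have hjoin : τ₁ n₁ = τ₂ 0 := hn₁'.trans h0₂.symm
  exact ⟨by omega, by rw [appendPartition_of_le n₁.zero_le, h0₁],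
    by rw [appendPartition_add hjoin, hn₂'],
    forall_step_appendPartition hjoin hmono₁ hmono₂,
    forall_step_appendPartition (P := fun a b => b - a < δ) hjoin hmesh₁ hmesh₂⟩

theorem RSSum_appendPartition {E : Type*} [AddCommGroup E] [Module ℝ E] (f : ℝ → E)
    (g : ℝ → ℝ) (hjoin : τ₁ n₁ = τ₂ 0) :
    RSSum f g (n₁ + n₂) (appendPartition n₁ τ₁ τ₂) = RSSum f g n₁ τ₁ + RSSum f g n₂ τ₂ := by
  unfold RSSum
  rw [Finset.sum_range_add]
  congr 1
  · refine Finset.sum_congr rfl fun i hi => ?_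
    rw [Finset.mem_range] at hi
    rw [appendPartition_of_le hi.le, appendPartition_of_le hi]
  · refine Finset.sum_congr rfl fun j _ => ?_
    rw [add_assoc, appendPartition_add hjoin, appendPartition_add hjoin]

end Partitions

namespace IsRS

variable {E : Type*} [NormedAddCommGroup E] {g : ℝ → ℝ} {s u t : ℝ}

section Module

variable [Module ℝ E] {f f' : ℝ → E} {I I' I₁ I₂ : E}

theorem iff_isFinePartition : IsRS f g s t I ↔
    ∀ ε > 0, ∃ δ > 0, ∀ n τ, IsFinePartition s t δ n τ → ‖RSSum f g n τ - I‖ < ε := by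
  simp only [IsRS, IsFinePartition, and_imp]

theorem unique (hst : s ≤ t) (h : IsRS f g s t I) (h' : IsRS f g s t I') : I = I' := by
  refine eq_of_forall_dist_le fun ε hε => ?_
  obtain ⟨δ, hδ, H⟩ := iff_isFinePartition.mp h (ε / 2) (half_pos hε)
  obtain ⟨δ', hδ', H'⟩ := iff_isFinePartition.mp h' (ε / 2) (half_pos hε)
  obtain ⟨n, τ, hτ⟩ := exists_isFinePartition hst (lt_min hδ hδ')
  have e := H n τ (hτ.mono_mesh (min_le_left _ _))
  have e' := H' n τ (hτ.mono_mesh (min_le_right _ _))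
  rw [dist_eq_norm]
  calc ‖I - I'‖ = ‖(RSSum f g n τ - I') - (RSSum f g n τ - I)‖ := by congr 1; abel
    _ ≤ ‖RSSum f g n τ - I'‖ + ‖RSSum f g n τ - I‖ := norm_sub_le _ _
    _ ≤ ε := by linarith

theorem eq_add_adjacent_intervals (hsu : s ≤ u) (hut : u ≤ t) (h : IsRS f g s t I)
    (h₁ : IsRS f g s u I₁) (h₂ : IsRS f g u t I₂) : I = I₁ + I₂ := by
  refine eq_of_forall_dist_le fun ε hε => ?_
  obtain ⟨δ, hδ, H⟩ := iff_isFinePartition.mp h (ε / 3) (by positivity)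
  obtain ⟨δ₁, hδ₁, H₁⟩ := iff_isFinePartition.mp h₁ (ε / 3) (by positivity)
  obtain ⟨δ₂, hδ₂, H₂⟩ := iff_isFinePartition.mp h₂ (ε / 3) (by positivity)
  set δ₀ := min δ (min δ₁ δ₂)
  have hδ₀ : 0 < δ₀ := lt_min hδ (lt_min hδ₁ hδ₂)
  obtain ⟨n₁, τ₁, hτ₁⟩ := exists_isFinePartition hsu hδ₀
  obtain ⟨n₂, τ₂, hτ₂⟩ := exists_isFinePartition hut hδ₀
  have hjoin : τ₁ n₁ = τ₂ 0 := hτ₁.2.2.1.trans hτ₂.2.1.symm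
  have e := H _ _ ((hτ₁.append hτ₂).mono_mesh (min_le_left _ _))
  have e₁ := H₁ n₁ τ₁ (hτ₁.mono_mesh ((min_le_right _ _).trans (min_le_left _ _)))
  have e₂ := H₂ n₂ τ₂ (hτ₂.mono_mesh ((min_le_right _ _).trans (min_le_right _ _)))
  rw [RSSum_appendPartition f g hjoin] at e
  set S₁ := RSSum f g n₁ τ₁
  set S₂ := RSSum f g n₂ τ₂
  rw [dist_eq_norm]
  calc ‖I - (I₁ + I₂)‖ = ‖(S₁ - I₁) + (S₂ - I₂) - (S₁ + S₂ - I)‖ := by congr 1; abel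
    _ ≤ ‖(S₁ - I₁) + (S₂ - I₂)‖ + ‖S₁ + S₂ - I‖ := norm_sub_le _ _
    _ ≤ ‖S₁ - I₁‖ + ‖S₂ - I₂‖ + ‖S₁ + S₂ - I‖ := by gcongr; exact norm_add_le _ _
    _ ≤ ε := by linarith

theorem congr (h : IsRS f g s t I) (hff' : Set.EqOn f f' (Set.Icc s t)) : IsRS f' g s t I := by
  refine iff_isFinePartition.mpr fun ε hε => ?_
  obtain ⟨δ, hδ, H⟩ := iff_isFinePartition.mp h ε hε
  refine ⟨δ, hδ, fun n τ hτ => ?_⟩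
  have hsum : RSSum f' g n τ = RSSum f g n τ :=
    Finset.sum_congr rfl fun i hi => by
      rw [hff' (hτ.mem_Icc (Finset.mem_range.mp hi).le)]
  exact hsum ▸ H n τ hτ

theorem zero : IsRS (fun _ => (0 : E)) g s t 0 :=
  fun _ hε => ⟨1, one_pos, fun _ _ _ _ _ _ _ => by simpa [RSSum] using hε⟩

theorem add (h : IsRS f g s t I) (h' : IsRS f' g s t I') :
    IsRS (fun r => f r + f' r) g s t (I + I') := by
  refine iff_isFinePartition.mpr fun ε hε => ?_
  obtain ⟨δ, hδ, H⟩ := iff_isFinePartition.mp h (ε / 2) (half_pos hε)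
  obtain ⟨δ', hδ', H'⟩ := iff_isFinePartition.mp h' (ε / 2) (half_pos hε)
  refine ⟨min δ δ', lt_min hδ hδ', fun n τ hτ => ?_⟩
  have e := H n τ (hτ.mono_mesh (min_le_left _ _))
  have e' := H' n τ (hτ.mono_mesh (min_le_right _ _))
  have hsum : RSSum (fun r => f r + f' r) g n τ = RSSum f g n τ + RSSum f' g n τ := by
    simp only [RSSum, smul_add, Finset.sum_add_distrib]
  calc ‖RSSum (fun r => f r + f' r) g n τ - (I + I')‖
      = ‖(RSSum f g n τ - I) + (RSSum f' g n τ - I')‖ := by rw [hsum]; congr 1; abel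
    _ ≤ ‖RSSum f g n τ - I‖ + ‖RSSum f' g n τ - I'‖ := norm_add_le _ _
    _ < ε := by linarith

theorem sum {ι : Type*} {S : Finset ι} {F : ι → ℝ → E} {J : ι → E}
    (h : ∀ j ∈ S, IsRS (F j) g s t (J j)) :
    IsRS (fun r => ∑ j ∈ S, F j r) g s t (∑ j ∈ S, J j) := by
  classical
  induction S using Finset.induction with
  | empty => simpa using zero
  | insert b S hb ih =>
    simp only [Finset.sum_insert hb]
    exact (h b (Finset.mem_insert_self b S)).add
      (ih fun j hj => h j (Finset.mem_insert_of_mem hj))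

end Module

theorem const_smul [NormedSpace ℝ E] {f : ℝ → E} {I : E}
    (c : ℝ) (h : IsRS f g s t I) : IsRS (fun r => c • f r) g s t (c • I) := by
  refine iff_isFinePartition.mpr fun ε hε => ?_
  obtain ⟨δ, hδ, H⟩ := iff_isFinePartition.mp h (ε / (|c| + 1)) (by positivity)
  refine ⟨δ, hδ, fun n τ hτ => ?_⟩
  have hsum : RSSum (fun r => c • f r) g n τ = c • RSSum f g n τ := by
    simp only [RSSum, Finset.smul_sum, smul_comm c]
  have e := H n τ hτ
  rw [lt_div_iff₀ (by positivity)] at e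
  rw [hsum, ← smul_sub, norm_smul, Real.norm_eq_abs]
  nlinarith [norm_nonneg (RSSum f g n τ - I), abs_nonneg c]

end IsRS

theorem Finset.sum_range_take_drop_append_singleton {α M : Type*} [AddCommMonoid M]
    (φ : List α → List α → M) (w : List α) (a : α) :
    ∑ j ∈ Finset.range ((w ++ [a]).length + 1), φ ((w ++ [a]).take j) ((w ++ [a]).drop j) =
      ∑ j ∈ Finset.range (w.length + 1), φ (w.take j) (w.drop j ++ [a]) + φ (w ++ [a]) [] := by
  rw [Finset.sum_range_succ, List.take_length, List.drop_length, List.length_append,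
    List.length_singleton]
  congr 1
  refine Finset.sum_congr rfl fun j hj => ?_
  have hj : j ≤ w.length := Nat.lt_succ_iff.mp (Finset.mem_range.mp hj)
  rw [List.take_append_of_le_length hj, List.drop_append_of_le_length hj]

namespace IsSimplexIntegral

variable {d : ℕ} {x : Fin d → ℝ → ℝ} {s : ℝ} {h J J' : ℝ → ℝ} {w : List (Fin d)} {a : Fin d}

theorem eq_of_nil (hJ : IsSimplexIntegral d x s h [] J) : J = h := by
  generalize hw : ([] : List (Fin d)) = w at hJ
  cases hJ with
  | nil => rfl
  | step => simp at hw

theorem exists_of_append_singleton (hJ : IsSimplexIntegral d x s h (w ++ [a]) J) :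
    ∃ J₀, IsSimplexIntegral d x s h w J₀ ∧ ∀ t, s ≤ t → IsRS J₀ (x a) s t (J t) := by
  generalize hw : w ++ [a] = w' at hJ
  cases hJ with
  | nil => simp at hw
  | step w₀ J₀ a₀ _ hJ₀ hRS =>
    obtain ⟨rfl, ha⟩ := List.append_inj' hw rfl
    obtain rfl : a = a₀ := by simpa using ha
    exact ⟨J₀, hJ₀, hRS⟩

theorem eqOn (hJ : IsSimplexIntegral d x s h w J) (hJ' : IsSimplexIntegral d x s h w J') :
    Set.EqOn J J' (Set.Ici s) := by
  induction hJ generalizing J' with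
  | nil => rw [hJ'.eq_of_nil]; exact Set.eqOn_refl _ _
  | step w J a J₂ _ hRS ih =>
    intro t ht
    obtain ⟨J₀, hJ₀, hRS'⟩ := hJ'.exists_of_append_singleton
    exact (hRS t ht).unique ht ((hRS' t ht).congr fun r hr => (ih hJ₀ hr.1).symm)

theorem isRS (hJ : IsSimplexIntegral d x s h w J)
    (hJ' : IsSimplexIntegral d x s h (w ++ [a]) J') {t : ℝ} (ht : s ≤ t) :
    IsRS J (x a) s t (J' t) := by
  obtain ⟨J₀, hJ₀, hRS⟩ := hJ'.exists_of_append_singleton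
  exact (hRS t ht).congr fun r hr => hJ₀.eqOn hJ hr.1

end IsSimplexIntegral

theorem IsSimplexIntegral.chen_identity {d : ℕ} {x : Fin d → ℝ → ℝ} {s u : ℝ}
    {X₁ X₂ : List (Fin d) → ℝ → ℝ}
    (hX₁ : ∀ w, IsSimplexIntegral d x s (fun _ => 1) w (X₁ w))
    (hX₂ : ∀ w, IsSimplexIntegral d x u (fun _ => 1) w (X₂ w)) (hsu : s ≤ u)
    (w : List (Fin d)) {t : ℝ} (hut : u ≤ t) :
    X₁ w t = ∑ j ∈ Finset.range (w.length + 1), X₁ (w.take j) u * X₂ (w.drop j) t := by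
  induction w using List.reverseRecOn generalizing t with
  | nil => simp [(hX₁ []).eq_of_nil, (hX₂ []).eq_of_nil]
  | append_singleton w a ih =>
    have hsplit : IsRS (X₁ w) (x a) u t
        (∑ j ∈ Finset.range (w.length + 1), X₁ (w.take j) u * X₂ (w.drop j ++ [a]) t) :=
      (IsRS.sum fun j _ => ((hX₂ _).isRS (hX₂ _) hut).const_smul (X₁ (w.take j) u)).congr
        fun r hr => by simpa only [smul_eq_mul] using (ih hr.1).symm
    rw [Finset.sum_range_take_drop_append_singleton (fun w₁ w₂ => X₁ w₁ u * X₂ w₂ t),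
      (hX₂ []).eq_of_nil, mul_one, add_comm,
      ((hX₁ w).isRS (hX₁ _) (hsu.trans hut)).eq_add_adjacent_intervals hsu hut
        ((hX₁ w).isRS (hX₁ _) hsu) hsplit]

theorem stmt13_general (d : ℕ) (T : ℝ)
    (x : ℝ → PiLp 1 (fun _ : Fin d => ℝ))
    (Y : ℝ → List (Fin d) → ℝ → ℝ)
    (hY : ∀ s' ∈ Set.Icc (0 : ℝ) T, ∀ w : List (Fin d),
      IsSimplexIntegral d (fun a u => x u a) s' (fun _ => 1) w (Y s' w)) :
    ∀ (k : ℕ), 1 ≤ k → ∀ (i : Fin k → Fin d) (s u t : ℝ),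
      0 ≤ s → s ≤ u → u ≤ t → t ≤ T →
      Y s (List.ofFn i) t =
        ∑ j ∈ Finset.range (k + 1),
          Y s ((List.ofFn i).take j) u * Y u ((List.ofFn i).drop j) t := by
  intro k _ i s u t hs hsu hut htT
  have hchen := IsSimplexIntegral.chen_identity (hY s ⟨hs, by linarith⟩)
    (hY u ⟨by linarith, by linarith⟩) hsu (List.ofFn i) hut
  rwa [List.length_ofFn] at hchen

/-- Chen's identity for the iterated integrals of a continuous path of
bounded variation, in tensor coordinates: for a word `i` of length k and s ≤ u ≤ t,
the coordinate of X^k_{s,t} at `i` is ∑_{j=0}^k X^j_{s,u}(first j letters) ·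
X^{k-j}_{u,t}(last k-j letters).  `Y s' w` denotes the iterated integral over the
simplex based at `s'` for the word `w` (with X^0 = 1). -/
theorem stmt13 (d : ℕ) (hd : 1 ≤ d) (T : ℝ) (hT : 0 ≤ T)
    (x : ℝ → PiLp 1 (fun _ : Fin d => ℝ))
    (hxc : ContinuousOn x (Set.Icc 0 T))
    (hxbv : BoundedVariationOn x (Set.Icc 0 T))
    (Y : ℝ → List (Fin d) → ℝ → ℝ)
    (hY : ∀ s' ∈ Set.Icc (0 : ℝ) T, ∀ w : List (Fin d),
      IsSimplexIntegral d (fun a u => x u a) s' (fun _ => 1) w (Y s' w)) :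
    ∀ (k : ℕ), 1 ≤ k → ∀ (i : Fin k → Fin d) (s u t : ℝ),
      0 ≤ s → s ≤ u → u ≤ t → t ≤ T →
      Y s (List.ofFn i) t =
        ∑ j ∈ Finset.range (k + 1),
          Y s ((List.ofFn i).take j) u * Y u ((List.ofFn i).drop j) t :=
  stmt13_general d T x Y hY
end

section
/- Grafting identity for elementary differentials: let f : ℝ^e → L(ℝ^d, ℝ^e) be smooth and let f(τ) be the elementary differential of a labeled rooted tree τ, defined by f(•_a) := f_a and f([τ_1 ⋯ τ_k]_a) := (d^k f_a)(f(τ_1), …, f(τ_k)). Then for any two labeled trees t_1, t_2, (d f(t_2))(f(t_1)) = f(t_1 ↷ t_2), where t_1 ↷ t_2 denotes the sum over all vertices v of t_2 of the tree obtained by attaching the root of t_1 to v by a new edge, and f is extended linearly to sums of trees. -/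
/-- Labeled rooted trees with labels in `Fin d`; the children of each vertex are
given by a finite family of trees. -/
inductive LTree (d : ℕ) : Type
  | node (a : Fin d) {k : ℕ} (c : Fin k → LTree d) : LTree d

/-- Number of vertices of a labeled tree. -/
def LTree.size {d : ℕ} : LTree d → ℕ
  | node _ c => 1 + ∑ j, (c j).size

/-- Elementary differentials: f(•_a) := f_a and
f([τ_1 ⋯ τ_k]_a) := (d^k f_a)(f(τ_1), …, f(τ_k)). -/
noncomputable def elemDiff {d e : ℕ} (f : (Fin e → ℝ) → Fin d → Fin e → ℝ) :
    LTree d → (Fin e → ℝ) → Fin e → ℝ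
  | LTree.node a c => fun y =>
      iteratedFDeriv ℝ _ (fun z => f z a) y (fun j => elemDiff f (c j) y)

/-- Grafting `t1 ↷ t2`: the list of trees obtained by attaching the root of `t1` by a
new edge to each vertex of `t2` (one tree per vertex of `t2`). -/
def LTree.graft {d : ℕ} (t1 : LTree d) : LTree d → List (LTree d)
  | LTree.node a c =>
      LTree.node a (Fin.snoc c t1) ::
        (List.ofFn fun j =>
          (LTree.graft t1 (c j)).map fun s => LTree.node a (Function.update c j s)).flatten

section Aux

variable {E' : Type*} [NormedAddCommGroup E'] [NormedSpace ℝ E']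
  {E : Type*} [NormedAddCommGroup E] [NormedSpace ℝ E]
  {G : Type*} [NormedAddCommGroup G] [NormedSpace ℝ G]

lemma fin_cons_tail_eq_update {k : ℕ} (v : Fin (k + 1) → E) (x : E) :
    Fin.cons x (Fin.tail v) = Function.update v 0 x := by
  funext i
  refine Fin.cases ?_ (fun j => ?_) i
  · simp
  · simp [Fin.tail, Function.update_of_ne (Fin.succ_ne_zero j)]

lemma fin_cons_update_tail {k : ℕ} (v : Fin (k + 1) → E) (j : Fin k) (z : E) :
    Fin.cons (v 0) (Function.update (Fin.tail v) j z) = Function.update v j.succ z := by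
  funext i
  refine Fin.cases ?_ (fun i => ?_) i
  · simp [Function.update_of_ne (Ne.symm (Fin.succ_ne_zero j))]
  · rcases eq_or_ne i j with rfl | h
    · simp [Fin.tail]
    · simp [Fin.tail, Function.update_of_ne h,
        Function.update_of_ne (fun hh => h (Fin.succ_injective _ hh))]

/-- Smoothness of `y ↦ A y (m y)` for a smooth family of continuous multilinear maps
applied to smooth arguments. -/
theorem contDiff_multi_apply :
    ∀ (k : ℕ) (A : E' → ContinuousMultilinearMap ℝ (fun _ : Fin k => E) G)
      (m : E' → Fin k → E), ContDiff ℝ (⊤ : ℕ∞) A → ContDiff ℝ (⊤ : ℕ∞) m →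
      ContDiff ℝ (⊤ : ℕ∞) fun y => A y (m y) := by
  intro k
  induction k with
  | zero =>
    intro A m hA _
    have heq : (fun y => A y (m y)) =
        fun y => continuousMultilinearCurryFin0 ℝ E G (A y) := by
      funext y
      simp only [continuousMultilinearCurryFin0_apply]
      exact congrArg (A y) (Subsingleton.elim _ _)
    rw [heq]
    exact ((continuousMultilinearCurryFin0 ℝ E G).contDiff).comp hA
  | succ k ih =>
    intro A m hA hm
    have hA' : ContDiff ℝ (⊤ : ℕ∞) fun y => (A y).curryLeft := by
      have h2 : (fun y => (A y).curryLeft) =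
          ⇑(continuousMultilinearCurryLeftEquiv ℝ (fun _ : Fin (k + 1) => E) G) ∘ A := rfl
      rw [h2]
      refine ContDiff.comp ?_ hA
      exact LinearIsometryEquiv.contDiff _
    have h0 : ContDiff ℝ (⊤ : ℕ∞) fun y => m y 0 := (contDiff_pi.1 hm) 0
    have hB : ContDiff ℝ (⊤ : ℕ∞) fun y => (A y).curryLeft (m y 0) := hA'.clm_apply h0
    have htail : ContDiff ℝ (⊤ : ℕ∞) fun y => Fin.tail (m y) :=
      contDiff_pi.2 fun j => (contDiff_pi.1 hm) j.succ
    have key := ih _ _ hB htail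
    have heq : (fun y => A y (m y)) =
        fun y => (A y).curryLeft (m y 0) (Fin.tail (m y)) := by
      funext y
      rw [ContinuousMultilinearMap.curryLeft_apply, Fin.cons_self_tail]
    rw [heq]
    exact key

/-- Leibniz rule for `y ↦ A y (m y)`. -/
theorem fderiv_multi_apply :
    ∀ (k : ℕ) (A : E' → ContinuousMultilinearMap ℝ (fun _ : Fin k => E) G)
      (m : E' → Fin k → E), ContDiff ℝ (⊤ : ℕ∞) A → ContDiff ℝ (⊤ : ℕ∞) m → ∀ (y w : E'),
      fderiv ℝ (fun z => A z (m z)) y w =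
        fderiv ℝ A y w (m y) +
          ∑ j, A y (Function.update (m y) j (fderiv ℝ (fun z => m z j) y w)) := by
  intro k
  induction k with
  | zero =>
    intro A m hA _ y w
    have heq : (fun z => A z (m z)) =
        (continuousMultilinearCurryFin0 ℝ E G : _ → G) ∘ A := by
      funext z
      simp only [Function.comp_apply, continuousMultilinearCurryFin0_apply]
      exact congrArg (A z) (Subsingleton.elim _ _)
    rw [heq, LinearIsometryEquiv.comp_fderiv]
    simp only [ContinuousLinearMap.coe_comp', Function.comp_apply,
      LinearIsometryEquiv.coe_coe'', continuousMultilinearCurryFin0_apply]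
    rw [Finset.univ_eq_empty, Finset.sum_empty, add_zero]
    exact congrArg (fderiv ℝ A y w) (Subsingleton.elim _ _)
  | succ k ih =>
    intro A m hA hm y w
    have hA' : ContDiff ℝ (⊤ : ℕ∞) fun z => (A z).curryLeft := by
      have h2 : (fun z => (A z).curryLeft) =
          ⇑(continuousMultilinearCurryLeftEquiv ℝ (fun _ : Fin (k + 1) => E) G) ∘ A := rfl
      rw [h2]
      refine ContDiff.comp ?_ hA
      exact LinearIsometryEquiv.contDiff _
    have h0 : ContDiff ℝ (⊤ : ℕ∞) fun z => m z 0 := (contDiff_pi.1 hm) 0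
    have hB : ContDiff ℝ (⊤ : ℕ∞) fun z => (A z).curryLeft (m z 0) := hA'.clm_apply h0
    have htail : ContDiff ℝ (⊤ : ℕ∞) fun z => Fin.tail (m z) :=
      contDiff_pi.2 fun j => (contDiff_pi.1 hm) j.succ
    have heq : (fun z => A z (m z)) =
        fun z => (A z).curryLeft (m z 0) (Fin.tail (m z)) := by
      funext z
      rw [ContinuousMultilinearMap.curryLeft_apply, Fin.cons_self_tail]
    rw [heq, ih _ _ hB htail y w]
    -- the derivative of the curried family
    have hcur : fderiv ℝ (fun z => (A z).curryLeft) y w = (fderiv ℝ A y w).curryLeft := by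
      have h2 : (fun z => (A z).curryLeft) =
          ⇑(continuousMultilinearCurryLeftEquiv ℝ (fun _ : Fin (k + 1) => E) G) ∘ A := rfl
      rw [h2]
      have hd := LinearIsometryEquiv.comp_fderiv (𝕜 := ℝ) (F := E →L[ℝ] E [×k]→L[ℝ] G)
        (f := A) (x := y) (continuousMultilinearCurryLeftEquiv ℝ (fun _ : Fin (k + 1) => E) G)
      exact congrArg (fun T => T w) hd
    have hfdB : fderiv ℝ (fun z => (A z).curryLeft (m z 0)) y w =
        (A y).curryLeft (fderiv ℝ (fun z => m z 0) y w) +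
          (fderiv ℝ A y w).curryLeft (m y 0) := by
      rw [fderiv_clm_apply (hA'.differentiable (by simp) y) (h0.differentiable (by simp) y)]
      simp only [ContinuousLinearMap.add_apply, ContinuousLinearMap.coe_comp',
        Function.comp_apply, ContinuousLinearMap.flip_apply, hcur]
    rw [hfdB]
    rw [ContinuousMultilinearMap.add_apply, ContinuousMultilinearMap.curryLeft_apply,
      ContinuousMultilinearMap.curryLeft_apply, Fin.cons_self_tail,
      fin_cons_tail_eq_update]
    have hterm : ∀ j : Fin k,
        (A y).curryLeft (m y 0) (Function.update (Fin.tail (m y)) j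
            (fderiv ℝ (fun z => Fin.tail (m z) j) y w)) =
          A y (Function.update (m y) j.succ (fderiv ℝ (fun z => m z j.succ) y w)) := by
      intro j
      rw [ContinuousMultilinearMap.curryLeft_apply, fin_cons_update_tail]
      rfl
    rw [Fin.sum_univ_succ]
    simp only [hterm]
    abel

/-- Commuting the direction of the outer derivative into the function:
`fderiv (D^k g) x w v = D^k (y ↦ fderiv g y w) x v`. -/
theorem fderiv_iteratedFDeriv_apply {E'' : Type} [NormedAddCommGroup E'']
    [NormedSpace ℝ E''] :
    ∀ (k : ℕ) {F : Type} [NormedAddCommGroup F] [NormedSpace ℝ F] (g : E'' → F),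
      ContDiff ℝ (⊤ : ℕ∞) g → ∀ (x w : E'') (v : Fin k → E''),
      fderiv ℝ (iteratedFDeriv ℝ k g) x w v =
        iteratedFDeriv ℝ k (fun y => fderiv ℝ g y w) x v := by
  intro k
  induction k with
  | zero =>
    intro F _ _ g hg x w v
    have h1 : fderiv ℝ (iteratedFDeriv ℝ 0 g) x w v =
        iteratedFDeriv ℝ 1 g x (Fin.cons w v) := by
      rw [iteratedFDeriv_succ_apply_left, Fin.cons_zero, Fin.tail_cons]
    rw [h1, iteratedFDeriv_one_apply, iteratedFDeriv_zero_apply, Fin.cons_zero]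
  | succ k ih =>
    intro F _ _ g hg x w v
    have hg' : ContDiff ℝ (⊤ : ℕ∞) (fderiv ℝ g) := hg.fderiv_right (by simp)
    have h1 : fderiv ℝ (iteratedFDeriv ℝ (k + 1) g) x w v =
        iteratedFDeriv ℝ (k + 2) g x (Fin.cons w v) := by
      rw [iteratedFDeriv_succ_apply_left, Fin.cons_zero, Fin.tail_cons]
    rw [h1, iteratedFDeriv_succ_apply_right]
    have hinit : Fin.init (Fin.cons w v : Fin (k + 2) → E'') =
        (Fin.cons w (Fin.init v) : Fin (k + 1) → E'') := by
      funext i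
      refine Fin.cases ?_ (fun i => ?_) i
      · simp [Fin.init]
      · simp only [Fin.init, ← Fin.succ_castSucc, Fin.cons_succ]
    have hlast : (Fin.cons w v : Fin (k + 2) → E'') (Fin.last (k + 1)) = v (Fin.last k) := by
      rw [← Fin.succ_last, Fin.cons_succ]
    rw [hinit, hlast, iteratedFDeriv_succ_apply_left, Fin.cons_zero, Fin.tail_cons,
      ih (fderiv ℝ g) hg' x w (Fin.init v)]
    rw [iteratedFDeriv_succ_apply_right]
    have hfe : (fun y => fderiv ℝ (fun z => fderiv ℝ g z w) y) =
        fun y => fderiv ℝ (fderiv ℝ g) y w := by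
      funext y
      ext u
      rw [fderiv_clm_apply (hg'.differentiable (by simp) y)
        (differentiableAt_const w)]
      simp only [fderiv_const, fderiv_fun_const, Pi.zero_apply, ContinuousLinearMap.comp_zero,
        ContinuousLinearMap.add_apply, ContinuousLinearMap.zero_apply,
        ContinuousLinearMap.flip_apply, zero_add]
      exact (hg.contDiffAt.isSymmSndFDerivAt (by rw [minSmoothness_of_isRCLikeNormedField]; exact WithTop.coe_le_coe.2 le_top)) u w
    rw [hfe]

end Aux

/-- the grafting identity for elementary differentials,
(d f(t₂))(f(t₁)) = f(t₁ ↷ t₂), with f extended linearly to sums (lists) of trees. -/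
theorem stmt15 (d e : ℕ) (f : (Fin e → ℝ) → Fin d → Fin e → ℝ)
    (hf : ContDiff ℝ (⊤ : ℕ∞) f) :
    ∀ (t1 t2 : LTree d) (y : Fin e → ℝ),
      fderiv ℝ (elemDiff f t2) y (elemDiff f t1 y) =
        ((t1.graft t2).map fun s => elemDiff f s y).sum := by
  have hfa : ∀ a, ContDiff ℝ (⊤ : ℕ∞) fun z => f z a := fun a => contDiff_pi.1 hf a
  have hsmooth : ∀ t : LTree d, ContDiff ℝ (⊤ : ℕ∞) (elemDiff f t) := by
    intro t
    induction t with
    | node a c ih =>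
      show ContDiff ℝ (⊤ : ℕ∞) fun y =>
        iteratedFDeriv ℝ _ (fun z => f z a) y fun j => elemDiff f (c j) y
      exact contDiff_multi_apply _ _ _ ((hfa a).iteratedFDeriv_right (by exact_mod_cast le_top))
        (contDiff_pi.2 fun j => ih j)
  intro t1 t2 y
  induction t2 with
  | @node a k c ih =>
    set w := elemDiff f t1 y with hw
    set g := fun z => f z a with hg
    have hA : ContDiff ℝ (⊤ : ℕ∞) (iteratedFDeriv ℝ k g) := (hfa a).iteratedFDeriv_right (by exact_mod_cast le_top)
    have hm : ContDiff ℝ (⊤ : ℕ∞) (fun z (j : Fin k) => elemDiff f (c j) z) :=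
      contDiff_pi.2 fun j => hsmooth (c j)
    have hL : elemDiff f (LTree.node a c) =
        fun z => iteratedFDeriv ℝ k g z fun j => elemDiff f (c j) z := rfl
    rw [hL, fderiv_multi_apply k _ _ hA hm y w]
    -- first term: the tree with t1 attached to the root
    have hterm1 : fderiv ℝ (iteratedFDeriv ℝ k g) y w (fun j => elemDiff f (c j) y) =
        elemDiff f (LTree.node a (Fin.snoc c t1)) y := by
      rw [fderiv_iteratedFDeriv_apply k g (hfa a) y w]
      have h2 : iteratedFDeriv ℝ k (fun z => fderiv ℝ g z w) y
            (fun j => elemDiff f (c j) y) =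
          iteratedFDeriv ℝ k (fderiv ℝ g) y (fun j => elemDiff f (c j) y) w :=
        iteratedFDeriv_clm_apply_const_apply ((hfa a).fderiv_right (m := ((⊤ : ℕ∞) : WithTop ℕ∞)) (by exact_mod_cast le_top)) (by exact_mod_cast le_top)
      rw [h2]
      show _ = iteratedFDeriv ℝ (k + 1) g y fun j =>
        elemDiff f ((Fin.snoc c t1 : Fin (k + 1) → LTree d) j) y
      have hv : Fin.init (fun j : Fin (k + 1) =>
            elemDiff f ((Fin.snoc c t1 : Fin (k + 1) → LTree d) j) y) =
          fun j : Fin k => elemDiff f (c j) y := by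
        funext i
        simp [Fin.init, Fin.snoc_castSucc]
      have hlast2 : elemDiff f ((Fin.snoc c t1 : Fin (k + 1) → LTree d) (Fin.last k)) y
          = w := by
        simp [hw]
      rw [iteratedFDeriv_succ_apply_right, hv, hlast2]
    rw [hterm1]
    -- second term: grafting into the subtrees
    have hterm2 : ∀ j : Fin k,
        iteratedFDeriv ℝ k g y
            (Function.update (fun i => elemDiff f (c i) y) j
              (fderiv ℝ (fun z => elemDiff f (c j) z) y w)) =
          (((t1.graft (c j)).map fun s => LTree.node a (Function.update c j s)).map
            fun s => elemDiff f s y).sum := by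
      intro j
      have hder : fderiv ℝ (fun z => elemDiff f (c j) z) y w =
          ((t1.graft (c j)).map fun s => elemDiff f s y).sum := ih j
      rw [hder]
      have hlin : ∀ X : Fin e → ℝ,
          iteratedFDeriv ℝ k g y (Function.update (fun i => elemDiff f (c i) y) j X) =
            ((iteratedFDeriv ℝ k g y).toContinuousLinearMap
              (fun i => elemDiff f (c i) y) j) X := fun X => rfl
      rw [hlin, map_list_sum, List.map_map, List.map_map]
      congr 1
      refine List.map_congr_left fun s _ => ?_
      simp only [Function.comp_apply]
      rw [← hlin]
      show _ = iteratedFDeriv ℝ k g y fun i => elemDiff f (Function.update c j s i) y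
      congr 1
      funext i
      exact (Function.apply_update (fun _ t => elemDiff f t y) c j s i).symm
    simp only [hterm2]
    -- now assemble the right-hand side
    show _ = ((LTree.node a (Fin.snoc c t1) ::
        (List.ofFn fun j =>
          (t1.graft (c j)).map fun s => LTree.node a (Function.update c j s)).flatten).map
        fun s => elemDiff f s y).sum
    rw [List.map_cons, List.sum_cons, List.map_flatten, List.map_ofFn, List.sum_flatten,
      List.map_ofFn, List.sum_ofFn]
    simp only [Function.comp]
end
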